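/- Let A be an associative algebra over a field k of characteristic zero with a locally nilpotent derivation ∂. Then the free k[D]-module H ⊗ A with products a ∘_n b = a·∂^n(b) (for a, b ∈ A, extended by sesquilinearity) satisfies the conformal associativity identity (a ∘_n b) ∘_m c = Σ_{s≥0} (-1)^s C(n,s) a ∘_{n-s} (b ∘_{m+s} c) for all n, m ≥ 0. -/

import Mathlib

open Polynomial Finset

noncomputable section

variable (k : Type*) [Field k] [CharZero k]
variable (A : Type*) [Ring A] [Algebra k A]

/-- The conformal product on `H ⊗ A ≅ A[D]` (elements written as polynomials
in `D` with coefficients in `A`): determined on `A` by `a ∘_n b = a·∂^n(b)`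
and extended by the sesquilinearity axioms
`(Da) ∘_n b = -n (a ∘_{n-1} b)` and `a ∘_n (Db) = D(a ∘_n b) + n (a ∘_{n-1} b)`;
explicitly,
`(Σ_s D^s a_s) ∘_n (Σ_t D^t b_t)
  = Σ_{s,t,j} (-1)^s C(t,j)·(n)_{s+j} · D^{t-j} (a_s·∂^{n-s-j} b_t)`
where `(n)_r = n!/(n-r)!` is the descending factorial. -/
def nmulD (d : A →ₗ[k] A) (x y : Polynomial A) (n : ℕ) : Polynomial A :=
  ∑ s ∈ Finset.range (x.natDegree + 1), ∑ t ∈ Finset.range (y.natDegree + 1),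
    ∑ j ∈ Finset.range (t + 1),
      if s + j ≤ n then
        (((-1 : ℤ) ^ s * (t.choose j : ℤ) * (n.descFactorial (s + j) : ℤ)) •
          ((Polynomial.X : Polynomial A) ^ (t - j) *
            Polynomial.C (x.coeff s * (⇑d)^[n - s - j] (y.coeff t))))
      else 0

/-!
With `X` in the role of `D`, the products are sesquilinear:
`(X x) ∘_n y = -n (x ∘_{n-1} y)` and `x ∘_n (X y) = X (x ∘_n y) + n (x ∘_{n-1} y)`.
Both sides of conformal associativity are additive in each argument and, by
`(n - s) C(n,s) = n C(n-1,s)` and `s C(n,s) = n C(n-1,s-1)`, transform in the same way when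
one argument is multiplied by `X`. So it suffices to take constants `a, b, c`, where the
identity reads `Σ_s (-1)^s C(n,s) ∂^{n-s}(b ∂^{m+s} c) = ∂^n b ∂^m c`; this follows by
induction on `n` from Pascal's rule and the Leibniz rule.
-/

section AlternatingSums

variable {M : Type*} [AddCommGroup M]

theorem sum_alternating_choose_mul_sub_smul (f : ℕ → M) (n : ℕ) :
    ∑ s ∈ range (n + 1), ((-1 : ℤ) ^ s * n.choose s * (n - s : ℕ)) • f s =
      (n : ℤ) • ∑ s ∈ range (n - 1 + 1), ((-1 : ℤ) ^ s * (n - 1).choose s) • f s := by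
  cases n with
  | zero => simp
  | succ n =>
    rw [sum_range_succ, Nat.sub_self, Nat.cast_zero, mul_zero, zero_smul, add_zero,
      Nat.add_sub_cancel, smul_sum]
    refine sum_congr rfl fun s _ => ?_
    have h : (n.choose s : ℤ) * (n + 1) = (n + 1).choose s * (n + 1 - s : ℕ) := by
      exact_mod_cast Nat.choose_mul_succ_eq n s
    rw [smul_smul]
    congr 1
    push_cast
    linear_combination (-1 : ℤ) ^ s * h.symm

theorem sum_alternating_choose_mul_smul (f : ℕ → M) (n : ℕ) :
    ∑ s ∈ range (n + 1), ((-1 : ℤ) ^ s * n.choose s * s) • f s =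
      -(n : ℤ) •
        ∑ s ∈ range (n - 1 + 1), ((-1 : ℤ) ^ s * (n - 1).choose s) • f (s + 1) := by
  cases n with
  | zero => simp
  | succ n =>
    rw [sum_range_succ', Nat.cast_zero, mul_zero, zero_smul, add_zero, Nat.add_sub_cancel,
      smul_sum]
    refine sum_congr rfl fun s _ => ?_
    have h : ((n + 1 : ℕ) : ℤ) * n.choose s = (n + 1).choose (s + 1) * (s + 1 : ℕ) := by
      exact_mod_cast Nat.add_one_mul_choose_eq n s
    rw [smul_smul]
    congr 1
    push_cast at h ⊢
    linear_combination (-1 : ℤ) ^ s * h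

end AlternatingSums

section Leibniz

variable {R : Type*} [Ring R] (d : R →+ R)

theorem sum_alternating_choose_iterate_mul (hd : ∀ a b, d (a * b) = d a * b + a * d b)
    (n m : ℕ) (b c : R) :
    ∑ s ∈ range (n + 1), ((-1 : ℤ) ^ s * n.choose s) • d^[n - s] (b * d^[m + s] c) =
      d^[n] b * d^[m] c := by
  induction n generalizing m with
  | zero => simp
  | succ n ih =>
    have hcoeff : ∀ (k s : ℕ) (v : R),
        ((-1 : ℤ) ^ s * k.choose s) • v = k.choose s • (-1 : ℤ) ^ s • v := fun k s v => by
      rw [mul_comm, mul_smul, natCast_zsmul]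
    simp only [hcoeff] at ih ⊢
    rw [sum_choose_succ_nsmul (fun s r => (-1 : ℤ) ^ s • d^[r] (b * d^[m + s] c)) n]
    have hd_out : ∑ s ∈ range (n + 1),
        n.choose s • (-1 : ℤ) ^ s • d^[n + 1 - s] (b * d^[m + s] c) =
          d (d^[n] b * d^[m] c) := by
      rw [← ih m, map_sum]
      refine sum_congr rfl fun s hs => ?_
      rw [map_nsmul, map_zsmul, show n + 1 - s = n - s + 1 by grind,
        Function.iterate_succ_apply']
    have hm_succ : ∑ s ∈ range (n + 1),
        n.choose s • (-1 : ℤ) ^ (s + 1) • d^[n - s] (b * d^[m + (s + 1)] c) =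
          -(d^[n] b * d^[m + 1] c) := by
      rw [← ih (m + 1), ← sum_neg_distrib]
      refine sum_congr rfl fun s _ => ?_
      rw [pow_succ, mul_neg_one, neg_smul, smul_neg, ← add_assoc, add_right_comm]
    rw [hd_out, hm_succ, hd]
    simp only [← Function.iterate_succ_apply' d]
    abel

end Leibniz

theorem Nat.descFactorial_succ_eq_mul_pred (n k : ℕ) :
    n.descFactorial (k + 1) = n * (n - 1).descFactorial k := by
  cases n with
  | zero => simp
  | succ n => exact Nat.succ_descFactorial_succ n k

@[elab_as_elim]
theorem Polynomial.induction_on_X_mul {R : Type*} [Semiring R] {motive : R[X] → Prop} (p : R[X])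
    (C : ∀ a, motive (C a)) (add : ∀ p q, motive p → motive q → motive (p + q))
    (X_mul : ∀ p, motive p → motive (X * p)) : motive p :=
  Polynomial.induction_on p C add fun n a h => by
    rw [pow_succ, ← mul_assoc, ← Polynomial.X_mul]
    exact X_mul _ h

section NthProduct

variable {R : Type*} [Ring R] (d : R →+ R)

/-- `(D^s a) ∘_n (D^t b)`, with `X` in the role of `D`. -/
def nthProductTerm (n s t : ℕ) (a b : R) : R[X] :=
  ∑ j ∈ range (t + 1), t.choose j •
    (((-1 : ℤ) ^ s * n.descFactorial (s + j)) • (X ^ (t - j) * C (a * d^[n - s - j] b)))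

@[simp]
theorem nthProductTerm_zero_left (n s t : ℕ) (b : R) : nthProductTerm d n s t 0 b = 0 := by
  simp [nthProductTerm]

@[simp]
theorem nthProductTerm_zero_right (n s t : ℕ) (a : R) : nthProductTerm d n s t a 0 = 0 := by
  simp [nthProductTerm, iterate_map_zero]

theorem nthProductTerm_add_left (n s t : ℕ) (a₁ a₂ b : R) :
    nthProductTerm d n s t (a₁ + a₂) b =
      nthProductTerm d n s t a₁ b + nthProductTerm d n s t a₂ b := by
  simp only [nthProductTerm, add_mul, map_add, mul_add, smul_add, sum_add_distrib]

theorem nthProductTerm_add_right (n s t : ℕ) (a b₁ b₂ : R) :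
    nthProductTerm d n s t a (b₁ + b₂) =
      nthProductTerm d n s t a b₁ + nthProductTerm d n s t a b₂ := by
  simp only [nthProductTerm, iterate_map_add, mul_add, map_add, smul_add, sum_add_distrib]

theorem nthProductTerm_succ_left (n s t : ℕ) (a b : R) :
    nthProductTerm d n (s + 1) t a b = -(n : ℤ) • nthProductTerm d (n - 1) s t a b := by
  simp only [nthProductTerm, smul_sum]
  refine sum_congr rfl fun j _ => ?_
  rw [smul_comm _ (t.choose j), smul_smul,
    show n - (s + 1) - j = n - 1 - s - j by omega, add_right_comm,
    Nat.descFactorial_succ_eq_mul_pred]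
  push_cast
  ring_nf

theorem nthProductTerm_succ_right (n s t : ℕ) (a b : R) :
    nthProductTerm d n s (t + 1) a b =
      X * nthProductTerm d n s t a b + (n : ℤ) • nthProductTerm d (n - 1) s t a b := by
  rw [nthProductTerm, sum_choose_succ_nsmul
    (fun j r => ((-1 : ℤ) ^ s * n.descFactorial (s + j)) • (X ^ r * C (a * d^[n - s - j] b))) t]
  congr 1
  · rw [nthProductTerm, mul_sum]
    refine sum_congr rfl fun j hj => ?_
    rw [show t + 1 - j = t - j + 1 by grind, pow_succ', mul_smul_comm, mul_smul_comm, mul_assoc]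
  · rw [nthProductTerm, smul_sum]
    refine sum_congr rfl fun j _ => ?_
    rw [smul_comm _ (t.choose j), smul_smul, show n - s - (j + 1) = n - 1 - s - j by omega,
      ← add_assoc, Nat.descFactorial_succ_eq_mul_pred]
    push_cast
    ring_nf

def nthProduct (x y : R[X]) (n : ℕ) : R[X] :=
  x.sum fun s a => y.sum fun t b => nthProductTerm d n s t a b

theorem nthProduct_monomial_left (s : ℕ) (a : R) (y : R[X]) (n : ℕ) :
    nthProduct d (monomial s a) y n = y.sum fun t b => nthProductTerm d n s t a b :=
  sum_monomial_index _ _ (by simp [sum_def])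

theorem nthProduct_monomial_right (x : R[X]) (t : ℕ) (b : R) (n : ℕ) :
    nthProduct d x (monomial t b) n = x.sum fun s a => nthProductTerm d n s t a b := by
  simp [nthProduct]

@[simp]
theorem nthProduct_C_C (a b : R) (n : ℕ) : nthProduct d (C a) (C b) n = C (a * d^[n] b) := by
  simp [nthProduct, nthProductTerm]

theorem nthProduct_add_left (x₁ x₂ y : R[X]) (n : ℕ) :
    nthProduct d (x₁ + x₂) y n = nthProduct d x₁ y n + nthProduct d x₂ y n :=
  sum_add_index _ _ _ (by simp [sum_def]) fun _ _ _ => by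
    simp only [nthProductTerm_add_left, sum_add]

theorem nthProduct_add_right (x y₁ y₂ : R[X]) (n : ℕ) :
    nthProduct d x (y₁ + y₂) n = nthProduct d x y₁ n + nthProduct d x y₂ n := by
  simp only [nthProduct, ← sum_add]
  congr 1
  funext s a
  exact sum_add_index _ _ _ (by simp) (nthProductTerm_add_right d n s · a)

theorem nthProduct_zsmul_left (c : ℤ) (x y : R[X]) (n : ℕ) :
    nthProduct d (c • x) y n = c • nthProduct d x y n :=
  map_zsmul (AddMonoidHom.mk' (nthProduct d · y n) (nthProduct_add_left d · · y n)) c x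

theorem nthProduct_zsmul_right (c : ℤ) (x y : R[X]) (n : ℕ) :
    nthProduct d x (c • y) n = c • nthProduct d x y n :=
  map_zsmul (AddMonoidHom.mk' (nthProduct d x · n) (nthProduct_add_right d x · · n)) c y

theorem nthProduct_X_mul_left (x y : R[X]) (n : ℕ) :
    nthProduct d (X * x) y n = -(n : ℤ) • nthProduct d x y (n - 1) := by
  induction x using Polynomial.induction_on' with
  | add p q hp hq => rw [mul_add, nthProduct_add_left, nthProduct_add_left, hp, hq, smul_add]
  | monomial s a =>
    simp only [X_mul_monomial, nthProduct_monomial_left, nthProductTerm_succ_left,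
      Polynomial.smul_sum]

theorem nthProduct_X_mul_right (x y : R[X]) (n : ℕ) :
    nthProduct d x (X * y) n = X * nthProduct d x y n + (n : ℤ) • nthProduct d x y (n - 1) := by
  induction y using Polynomial.induction_on' with
  | add p q hp hq =>
    simp only [mul_add, nthProduct_add_right, hp, hq, smul_add]
    abel
  | monomial t b =>
    simp only [X_mul_monomial, nthProduct_monomial_right, nthProductTerm_succ_right, sum_def,
      mul_sum, smul_sum, sum_add_distrib]

end NthProduct

section ConformalAssoc

variable {R : Type*} [Ring R] (d : R →+ R)

def ConformalAssoc (x y z : R[X]) : Prop :=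
  ∀ n m : ℕ, nthProduct d (nthProduct d x y n) z m =
    ∑ s ∈ range (n + 1),
      ((-1 : ℤ) ^ s * n.choose s) • nthProduct d x (nthProduct d y z (m + s)) (n - s)

variable {d}

theorem conformalAssoc_C_C_C (hd : ∀ a b, d (a * b) = d a * b + a * d b) (a b c : R) :
    ConformalAssoc d (C a) (C b) (C c) := by
  intro n m
  rw [nthProduct_C_C, nthProduct_C_C, mul_assoc,
    ← sum_alternating_choose_iterate_mul d hd n m b c]
  simp only [nthProduct_C_C, mul_sum, mul_smul_comm, map_sum, map_zsmul]

theorem ConformalAssoc.add_left {x₁ x₂ y z : R[X]} (h₁ : ConformalAssoc d x₁ y z)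
    (h₂ : ConformalAssoc d x₂ y z) : ConformalAssoc d (x₁ + x₂) y z := by
  intro n m
  simp only [nthProduct_add_left, h₁ n m, h₂ n m, smul_add, sum_add_distrib]

theorem ConformalAssoc.add_middle {x y₁ y₂ z : R[X]} (h₁ : ConformalAssoc d x y₁ z)
    (h₂ : ConformalAssoc d x y₂ z) : ConformalAssoc d x (y₁ + y₂) z := by
  intro n m
  simp only [nthProduct_add_left, nthProduct_add_right, h₁ n m, h₂ n m, smul_add,
    sum_add_distrib]

theorem ConformalAssoc.add_right {x y z₁ z₂ : R[X]} (h₁ : ConformalAssoc d x y z₁)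
    (h₂ : ConformalAssoc d x y z₂) : ConformalAssoc d x y (z₁ + z₂) := by
  intro n m
  simp only [nthProduct_add_right, h₁ n m, h₂ n m, smul_add, sum_add_distrib]

theorem ConformalAssoc.X_mul_left {x y z : R[X]} (h : ConformalAssoc d x y z) :
    ConformalAssoc d (X * x) y z := by
  intro n m
  rw [nthProduct_X_mul_left, nthProduct_zsmul_left, h]
  simp only [nthProduct_X_mul_left, smul_smul]
  simp only [mul_neg, neg_smul, sum_neg_distrib, Nat.sub_right_comm n _ 1]
  rw [sum_alternating_choose_mul_sub_smul]

/-- The factor `m` kills the term where `m - 1` truncates. -/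
theorem ConformalAssoc.natCast_smul_sub_one {x y z : R[X]} (h : ConformalAssoc d x y z)
    (n m : ℕ) : (m : ℤ) • nthProduct d (nthProduct d x y n) z (m - 1) =
      ∑ s ∈ range (n + 1),
        ((-1 : ℤ) ^ s * n.choose s * m) •
          nthProduct d x (nthProduct d y z (m + s - 1)) (n - s) := by
  cases m with
  | zero => simp
  | succ m =>
    rw [Nat.add_sub_cancel, h, smul_sum]
    refine sum_congr rfl fun s _ => ?_
    rw [smul_smul, mul_comm, add_right_comm, Nat.add_sub_cancel]

theorem ConformalAssoc.X_mul_middle {x y z : R[X]} (h : ConformalAssoc d x y z) :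
    ConformalAssoc d x (X * y) z := by
  intro n m
  rw [nthProduct_X_mul_right, nthProduct_add_left, nthProduct_zsmul_left, nthProduct_X_mul_left,
    neg_smul, h.natCast_smul_sub_one, h]
  simp only [nthProduct_X_mul_left, nthProduct_zsmul_right, smul_smul]
  simp only [Nat.cast_add, mul_neg, mul_add, add_smul, neg_smul, sum_add_distrib, sum_neg_distrib]
  rw [sum_alternating_choose_mul_smul]
  simp only [Nat.add_succ_sub_one, Nat.sub_add_eq, Nat.sub_right_comm n _ 1, neg_smul, neg_add,
    neg_neg]

theorem ConformalAssoc.X_mul_right {x y z : R[X]} (h : ConformalAssoc d x y z) :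
    ConformalAssoc d x y (X * z) := by
  intro n m
  rw [nthProduct_X_mul_right, h, h.natCast_smul_sub_one, mul_sum]
  simp only [nthProduct_X_mul_right, nthProduct_add_right, nthProduct_zsmul_right, smul_add,
    smul_smul, mul_smul_comm]
  simp only [Nat.cast_add, mul_add, add_smul, sum_add_distrib, Nat.sub_right_comm n _ 1]
  rw [sum_alternating_choose_mul_sub_smul, sum_alternating_choose_mul_smul]
  simp only [Nat.add_succ_sub_one, Nat.sub_add_eq, Nat.sub_right_comm n _ 1, neg_smul]
  abel

theorem conformalAssoc_of_leibniz (hd : ∀ a b, d (a * b) = d a * b + a * d b) (x y z : R[X]) :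
    ConformalAssoc d x y z := by
  induction x using Polynomial.induction_on_X_mul with
  | C a =>
    induction y using Polynomial.induction_on_X_mul with
    | C b =>
      induction z using Polynomial.induction_on_X_mul with
      | C c => exact conformalAssoc_C_C_C hd a b c
      | add z₁ z₂ h₁ h₂ => exact h₁.add_right h₂
      | X_mul z h => exact h.X_mul_right
    | add y₁ y₂ h₁ h₂ => exact h₁.add_middle h₂
    | X_mul y h => exact h.X_mul_middle
  | add x₁ x₂ h₁ h₂ => exact h₁.add_left h₂
  | X_mul x h => exact h.X_mul_left

end ConformalAssoc

theorem nmulD_eq_nthProduct {K R : Type*} [Field K] [Ring R] [Algebra K R] (d : R →ₗ[K] R)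
    (x y : R[X]) (n : ℕ) : nmulD K R d x y n = nthProduct d.toAddMonoidHom x y n := by
  rw [nthProduct, sum_over_range x (by simp [sum_def])]
  refine sum_congr rfl fun s _ => ?_
  rw [sum_over_range y (by simp)]
  refine sum_congr rfl fun t _ => ?_
  rw [nthProductTerm]
  refine sum_congr rfl fun j _ => ?_
  split_ifs with hj
  · rw [smul_comm, ← natCast_zsmul, smul_smul, mul_right_comm, LinearMap.toAddMonoidHom_coe]
  · rw [Nat.descFactorial_eq_zero_iff_lt.mpr (by omega)]
    simp

theorem diff_conformal_associativity (d : A →ₗ[k] A)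
    (hleib : ∀ a b : A, d (a * b) = d a * b + a * d b) :
    ∀ (x y z : Polynomial A) (n m : ℕ),
      nmulD k A d (nmulD k A d x y n) z m =
        ∑ s ∈ Finset.range (n + 1),
          (((-1 : ℤ) ^ s * (n.choose s : ℤ)) •
            nmulD k A d x (nmulD k A d y z (m + s)) (n - s)) := by
  simp only [nmulD_eq_nthProduct]
  exact conformalAssoc_of_leibniz hleib

end
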